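/- arXiv:1910.04021 — 2 statements merged into one kernel-verified Lean document; each statement's English description precedes it below -/
import Mathlib

section
/- For every u ∈ [0,V), the strict ordering ρ̌_u < ρ̃_u < ρ̃_u/α < ρ̂_u < ρ*_u holds. -/
/-! Write `t = ρ̃_u / α`, so that `f'(t) = u` and `φ_u(ρ) = α f(t) + u (ρ - α t)`.
Since `f'(0) = v(0) = V > u`, `t > 0`. Strict concavity and `f(0) = 0` give the two strict
inequalities `u t < f(t)` (tangent at `t` above the chord from `0`) and `α f(t) < f(α t)`.
Hence `f - φ_u` is negative at `0` and `R`, positive at `α t` and `t`, so by the intermediate value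
theorem `f = φ_u` somewhere in `(0, α t)` and somewhere in `(t, R)`; this places `ρ̌_u` and `ρ̂_u`.
Finally `f(ρ̂_u) = φ_u(ρ̂_u) > u ρ̂_u` says `v(ρ̂_u) > u = v(ρ*_u)`, and `v` is decreasing. -/

open Set Filter Topology

theorem strictConcaveOn_of_hasDerivAt_of_hasDerivAt_neg {D : Set ℝ} (hD : Convex ℝ D)
    {f f' f'' : ℝ → ℝ} (hf : ∀ x ∈ D, HasDerivAt f (f' x) x)
    (hf' : ∀ x ∈ interior D, HasDerivAt f' (f'' x) x) (hf'' : ∀ x ∈ interior D, f'' x < 0) :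
    StrictConcaveOn ℝ D f := by
  refine strictConcaveOn_of_deriv2_neg hD
    (fun x hx => (hf x hx).continuousAt.continuousWithinAt) fun x hx => ?_
  have hderiv : deriv f =ᶠ[𝓝 x] f' := eventually_of_mem (isOpen_interior.mem_nhds hx)
    fun y hy => (hf y (interior_subset hy)).deriv
  rw [Function.iterate_succ_apply, Function.iterate_one, hderiv.deriv_eq, (hf' x hx).deriv]
  exact hf'' x hx

theorem HasDerivAt.eq_of_eqOn_mul_self {f v : ℝ → ℝ} {a R : ℝ} (hR : 0 < R)
    (hfv : ∀ ρ ∈ Icc 0 R, f ρ = ρ * v ρ) (hf : HasDerivAt f a 0) (hv : DifferentiableAt ℝ v 0) :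
    a = v 0 := by
  have h0 : (0 : ℝ) ∈ Icc 0 R := ⟨le_rfl, hR.le⟩
  have hmul : HasDerivWithinAt f (1 * v 0 + 0 * _root_.deriv v 0) (Icc 0 R) 0 :=
    ((hasDerivAt_id 0).mul hv.hasDerivAt).hasDerivWithinAt.congr hfv (hfv 0 h0)
  simpa using (uniqueDiffOn_Icc hR 0 h0).eq_deriv _ hf.hasDerivWithinAt hmul

theorem HasDerivAt.const_mul_comp_div_const {f : ℝ → ℝ} {a α t : ℝ} (hα : α ≠ 0)
    (hf : HasDerivAt f a t) : HasDerivAt (fun x => α * f (x / α)) a (α * t) := by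
  have hdiv : HasDerivAt (fun x => x / α) (1 / α) (α * t) := by
    simpa using (hasDerivAt_id (α * t)).div_const α
  rw [← mul_div_cancel_left₀ t hα] at hf
  have h := (hf.comp (α * t) hdiv).const_mul α
  rwa [mul_one_div, mul_div_cancel₀ a hα] at h

namespace StrictConcaveOn

variable {S : Set ℝ} {f : ℝ → ℝ} {t : ℝ}

theorem mul_lt_of_hasDerivAt {u : ℝ} (hfc : StrictConcaveOn ℝ S f) (h0 : 0 ∈ S) (ht : t ∈ S)
    (ht0 : 0 < t) (hf0 : f 0 = 0) (hf : HasDerivAt f u t) : u * t < f t := by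
  have := hfc.lt_slope_of_hasDerivAt h0 ht ht0 hf
  rwa [slope_def_field, hf0, sub_zero, sub_zero, lt_div_iff₀ ht0] at this

theorem mul_apply_lt_apply_mul {α : ℝ} (hfc : StrictConcaveOn ℝ S f) (h0 : 0 ∈ S) (ht : t ∈ S)
    (ht0 : t ≠ 0) (hf0 : f 0 = 0) (hα : α ∈ Ioo 0 1) : α * f t < f (α * t) := by
  have := hfc.2 h0 ht ht0.symm (sub_pos.2 hα.2) hα.1 (sub_add_cancel 1 α)
  simpa [hf0] using this

end StrictConcaveOn

section Crossing

variable {f : ℝ → ℝ} {R α t u : ℝ}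

theorem exists_eq_line_mem_Ioo_left (hf : ContinuousOn f (Icc 0 (α * t))) (hf0 : f 0 = 0)
    (hα : 0 < α) (ht : 0 ≤ t) (hgap : u * t < f t) (hchord : α * f t < f (α * t)) :
    ∃ z ∈ Ioo 0 (α * t), f z = α * f t + u * (z - α * t) := by
  obtain ⟨z, hz, hfz⟩ := intermediate_value_Ioo (by positivity)
    (hf.sub (by fun_prop : ContinuousOn (fun ρ => α * f t + u * (ρ - α * t)) _))
    (show (0 : ℝ) ∈ Ioo _ _ from
      ⟨by simp only [Pi.sub_apply, hf0]; nlinarith, by simp only [Pi.sub_apply]; linarith⟩)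
  exact ⟨z, hz, sub_eq_zero.1 hfz⟩

theorem exists_eq_line_mem_Ioo_right (hf : ContinuousOn f (Icc t R)) (hfR : f R = 0)
    (hα : α ∈ Ioo 0 1) (ht : 0 ≤ t) (htR : t ≤ R) (hu : 0 ≤ u) (hgap : u * t < f t) :
    ∃ z ∈ Ioo t R, f z = α * f t + u * (z - α * t) := by
  obtain ⟨hα0, hα1⟩ := hα
  obtain ⟨z, hz, hfz⟩ := intermediate_value_Ioo' htR
    (hf.sub (by fun_prop : ContinuousOn (fun ρ => α * f t + u * (ρ - α * t)) _))
    (show (0 : ℝ) ∈ Ioo _ _ from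
      ⟨by simp only [Pi.sub_apply, hfR]; nlinarith, by simp only [Pi.sub_apply]; nlinarith⟩)
  exact ⟨z, hz, sub_eq_zero.1 hfz⟩

theorem IsLeast.lt_of_eq_line {a : ℝ} (hf : ContinuousOn f (Icc 0 R)) (hf0 : f 0 = 0)
    (hα : α ∈ Ioo 0 1) (ht : t ∈ Icc 0 R) (hgap : u * t < f t) (hchord : α * f t < f (α * t))
    (ha : IsLeast {ρ | ρ ∈ Icc 0 R ∧ f ρ = α * f t + u * (ρ - α * t)} a) : a < α * t := by
  have hαtR : α * t ≤ R := (mul_le_of_le_one_left ht.1 hα.2.le).trans ht.2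
  obtain ⟨z, hz, hfz⟩ := exists_eq_line_mem_Ioo_left
    (hf.mono (Icc_subset_Icc le_rfl hαtR)) hf0 hα.1 ht.1 hgap hchord
  exact (ha.2 ⟨⟨hz.1.le, hz.2.le.trans hαtR⟩, hfz⟩).trans_lt hz.2

theorem IsGreatest.lt_of_eq_line {b : ℝ} (hf : ContinuousOn f (Icc 0 R)) (hfR : f R = 0)
    (hα : α ∈ Ioo 0 1) (ht : t ∈ Icc 0 R) (hu : 0 ≤ u) (hgap : u * t < f t)
    (hb : IsGreatest {ρ | ρ ∈ Icc 0 R ∧ f ρ = α * f t + u * (ρ - α * t)} b) : t < b := by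
  obtain ⟨z, hz, hfz⟩ := exists_eq_line_mem_Ioo_right
    (hf.mono (Icc_subset_Icc ht.1 le_rfl)) hfR hα ht.1 ht.2 hu hgap
  exact hz.1.trans_le (hb.2 ⟨⟨ht.1.trans hz.1.le, hz.2.le⟩, hfz⟩)

theorem lt_speed_of_eq_line {v : ℝ → ℝ} {z : ℝ} (hα : 0 < α) (hz : 0 < z)
    (hfv : f z = z * v z) (hgap : u * t < f t) (hfz : f z = α * f t + u * (z - α * t)) :
    u < v z := by
  have hmul : z * u < z * v z := by nlinarith [mul_pos hα (sub_pos.2 hgap)]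
  exact lt_of_mul_lt_mul_left hmul hz.le

end Crossing

theorem stmt_5_general
    (R β B α V : ℝ) (f v f' f'' v' : ℝ → ℝ)
    (hR : 0 < R) (hβ : 0 < β) (hα : α ∈ Set.Ioo (0:ℝ) 1)
    (hf0 : f 0 = 0) (hfR : f R = 0)
    (hfv : ∀ ρ ∈ Set.Icc (0:ℝ) R, f ρ = ρ * v ρ)
    (hfd1 : ∀ ρ ∈ Set.Icc (0:ℝ) R, HasDerivAt f (f' ρ) ρ)
    (hfd2 : ∀ ρ ∈ Set.Icc (0:ℝ) R, HasDerivAt f' (f'' ρ) ρ)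
    (hconc : ∀ ρ ∈ Set.Icc (0:ℝ) R, -B ≤ f'' ρ ∧ f'' ρ ≤ -β)
    (hvd : ∀ ρ ∈ Set.Icc (0:ℝ) R, HasDerivAt v (v' ρ) ρ)
    (hv'neg : ∀ ρ ∈ Set.Ioo (0:ℝ) R, v' ρ < 0)
    (hV : V = v 0)
    (rt : ℝ → ℝ)
    (hrt : ∀ u ∈ Set.Icc (0:ℝ) V, rt u ∈ Set.Icc (0:ℝ) (α * R) ∧
      HasDerivAt (fun x => α * f (x / α)) u (rt u))
    (rc rh : ℝ → ℝ)
    (hrc : ∀ u ∈ Set.Icc (0:ℝ) V, IsLeast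
      {ρ : ℝ | ρ ∈ Set.Icc (0:ℝ) R ∧ f ρ = α * f (rt u / α) + u * (ρ - rt u)} (rc u))
    (hrh : ∀ u ∈ Set.Icc (0:ℝ) V, IsGreatest
      {ρ : ℝ | ρ ∈ Set.Icc (0:ℝ) R ∧ f ρ = α * f (rt u / α) + u * (ρ - rt u)} (rh u))
    (rs : ℝ → ℝ)
    (hrs : ∀ u ∈ Set.Icc (0:ℝ) V, rs u ∈ Set.Icc (0:ℝ) R ∧ v (rs u) = u)
    :
    ∀ u ∈ Set.Ico (0:ℝ) V,
      rc u < rt u ∧ rt u < rt u / α ∧ rt u / α < rh u ∧ rh u < rs u := by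
  rintro u ⟨hu0, huV⟩
  have hu : u ∈ Icc 0 V := ⟨hu0, huV.le⟩
  obtain ⟨⟨hrt0, hrtR⟩, hrtd⟩ := hrt u hu
  obtain ⟨hrsR, hrsv⟩ := hrs u hu
  have hrcu := hrc u hu
  have hrhu := hrh u hu
  generalize rt u = s at hrt0 hrtR hrtd hrcu hrhu ⊢
  obtain ⟨t, rfl⟩ : ∃ t, s = α * t := ⟨s / α, (mul_div_cancel₀ s hα.1.ne').symm⟩
  simp only [mul_div_cancel_left₀ _ hα.1.ne'] at hrcu hrhu ⊢
  have h0R : (0 : ℝ) ∈ Icc 0 R := ⟨le_rfl, hR.le⟩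
  have htR : t ∈ Icc 0 R := ⟨nonneg_of_mul_nonneg_right hrt0 hα.1, le_of_mul_le_mul_left hrtR hα.1⟩
  have hut : f' t = u := ((hfd1 t htR).const_mul_comp_div_const hα.1.ne').unique hrtd
  have ht0 : 0 < t := htR.1.lt_of_ne <| by
    rintro rfl
    have := (hfd1 0 h0R).eq_of_eqOn_mul_self hR hfv (hvd 0 h0R).differentiableAt
    linarith
  have hfc : StrictConcaveOn ℝ (Icc 0 R) f :=
    strictConcaveOn_of_hasDerivAt_of_hasDerivAt_neg (convex_Icc 0 R) hfd1
      (fun x hx => hfd2 x (interior_subset hx))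
      (fun x hx => (hconc x (interior_subset hx)).2.trans_lt (neg_neg_of_pos hβ))
  have hcont : ContinuousOn f (Icc 0 R) := fun x hx => (hfd1 x hx).continuousAt.continuousWithinAt
  have hgap : u * t < f t := hfc.mul_lt_of_hasDerivAt h0R htR ht0 hf0 (hut ▸ hfd1 t htR)
  have hchord : α * f t < f (α * t) := hfc.mul_apply_lt_apply_mul h0R htR ht0.ne' hf0 hα
  have hlt_rh : t < rh u := hrhu.lt_of_eq_line hcont hfR hα htR hu0 hgap
  obtain ⟨hrhR, hfrh⟩ := hrhu.1
  have hv_rh : u < v (rh u) := lt_speed_of_eq_line hα.1 (ht0.trans hlt_rh) (hfv _ hrhR) hgap hfrh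
  have hv : StrictAntiOn v (Icc 0 R) :=
    strictAntiOn_of_hasDerivWithinAt_neg (convex_Icc 0 R)
      (fun x hx => (hvd x hx).continuousAt.continuousWithinAt)
      (fun x hx => (hvd x (interior_subset hx)).hasDerivWithinAt) (by rwa [interior_Icc])
  exact ⟨hrcu.lt_of_eq_line hcont hf0 hα htR hgap hchord, mul_lt_of_lt_one_left ht0 hα.2,
    hlt_rh, (hv.lt_iff_gt hrsR hrhR).1 (hrsv.symm ▸ hv_rh)⟩

theorem stmt_5
    (R β B α V : ℝ) (f v f' f'' v' : ℝ → ℝ)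
    (hR : 0 < R) (hβ : 0 < β) (hB : 0 < B) (hα : α ∈ Set.Ioo (0:ℝ) 1)
    (hf0 : f 0 = 0) (hfR : f R = 0)
    (hfv : ∀ ρ ∈ Set.Icc (0:ℝ) R, f ρ = ρ * v ρ)
    (hfd1 : ∀ ρ ∈ Set.Icc (0:ℝ) R, HasDerivAt f (f' ρ) ρ)
    (hfd2 : ∀ ρ ∈ Set.Icc (0:ℝ) R, HasDerivAt f' (f'' ρ) ρ)
    (hfc : ContinuousOn f'' (Set.Icc (0:ℝ) R))
    (hconc : ∀ ρ ∈ Set.Icc (0:ℝ) R, -B ≤ f'' ρ ∧ f'' ρ ≤ -β)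
    (hvd : ∀ ρ ∈ Set.Icc (0:ℝ) R, HasDerivAt v (v' ρ) ρ)
    (hv'neg : ∀ ρ ∈ Set.Ioo (0:ℝ) R, v' ρ < 0)
    (hvnn : ∀ ρ ∈ Set.Icc (0:ℝ) R, 0 ≤ v ρ)
    (hV : V = v 0)
    (rt : ℝ → ℝ)
    (hrt : ∀ u ∈ Set.Icc (0:ℝ) V, rt u ∈ Set.Icc (0:ℝ) (α * R) ∧
      HasDerivAt (fun x => α * f (x / α)) u (rt u))
    (rc rh : ℝ → ℝ)
    (hrc : ∀ u ∈ Set.Icc (0:ℝ) V, IsLeast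
      {ρ : ℝ | ρ ∈ Set.Icc (0:ℝ) R ∧ f ρ = α * f (rt u / α) + u * (ρ - rt u)} (rc u))
    (hrh : ∀ u ∈ Set.Icc (0:ℝ) V, IsGreatest
      {ρ : ℝ | ρ ∈ Set.Icc (0:ℝ) R ∧ f ρ = α * f (rt u / α) + u * (ρ - rt u)} (rh u))
    (rs : ℝ → ℝ)
    (hrs : ∀ u ∈ Set.Icc (0:ℝ) V, rs u ∈ Set.Icc (0:ℝ) R ∧ v (rs u) = u)
    :
    ∀ u ∈ Set.Ico (0:ℝ) V,
      rc u < rt u ∧ rt u < rt u / α ∧ rt u / α < rh u ∧ rh u < rs u :=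
  stmt_5_general R β B α V f v f' f'' v' hR hβ hα hf0 hfR hfv hfd1 hfd2 hconc hvd hv'neg hV rt hrt
    rc rh hrc hrh rs hrs
end

section
/- For u ∈ [0,V], the equality ρ̂_u = ρ̌_u holds if and only if u = V. -/
/-!
Since `f'' < 0`, `f` is strictly concave and `f'` is injective, with `f'(0) = v(0) = V`; the
tangent point of `f_α` corresponds to `x = ρ̃_u / α`, where `f'(x) = u`. If `u = V` then
`ρ̃_u = 0` and `φ_u` is the tangent line of `f` at `0`, which meets the strictly concave `f` only
at `0`. If `u < V` then `x > 0`, and strict concavity together with `f(0) = f(R) = 0` makes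
`f - φ_u` negative at `0` and at `R` but positive at `ρ̃_u = αx` (as `f(αx) > α f(x)`), so the
intermediate value theorem gives contact points on both sides of `ρ̃_u`.
-/

open Set

lemma strictAntiOn_Icc_of_hasDerivAt_neg {f f' : ℝ → ℝ} {a b : ℝ}
    (hf : ∀ x ∈ Icc a b, HasDerivAt f (f' x) x) (hneg : ∀ x ∈ Icc a b, f' x < 0) :
    StrictAntiOn f (Icc a b) :=
  strictAntiOn_of_deriv_neg (convex_Icc a b)
    (fun x hx => (hf x hx).continuousAt.continuousWithinAt) fun x hx => by
      rw [interior_Icc] at hx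
      rw [(hf x (Ioo_subset_Icc_self hx)).deriv]
      exact hneg x (Ioo_subset_Icc_self hx)

lemma strictConcaveOn_Icc_of_hasDerivAt {f f' : ℝ → ℝ} {a b : ℝ}
    (hf : ∀ x ∈ Icc a b, HasDerivAt f (f' x) x) (hanti : StrictAntiOn f' (Icc a b)) :
    StrictConcaveOn ℝ (Icc a b) f := by
  refine StrictAntiOn.strictConcaveOn_of_deriv (convex_Icc a b)
    (fun x hx => (hf x hx).continuousAt.continuousWithinAt) ?_
  rw [interior_Icc]
  refine (hanti.mono Ioo_subset_Icc_self).congr fun x hx => ?_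
  exact ((hf x (Ioo_subset_Icc_self hx)).deriv).symm

lemma StrictConcaveOn.lt_tangent_of_hasDerivAt {S : Set ℝ} {f : ℝ → ℝ} {x y d : ℝ}
    (hfc : StrictConcaveOn ℝ S f) (hx : x ∈ S) (hy : y ∈ S) (hxy : y ≠ x)
    (hd : HasDerivAt f d x) : f y < f x + d * (y - x) := by
  rcases hxy.lt_or_gt with hlt | hgt
  · have := hfc.lt_slope_of_hasDerivAt hy hx hlt hd
    rw [slope_def_field, lt_div_iff₀ (sub_pos.mpr hlt)] at this
    linarith
  · have := hfc.slope_lt_of_hasDerivAt hx hy hgt hd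
    rw [slope_def_field, div_lt_iff₀ (sub_pos.mpr hgt)] at this
    linarith

lemma HasDerivAt.rescale {f : ℝ → ℝ} {d t α : ℝ} (hα : α ≠ 0) (hf : HasDerivAt f d (t / α)) :
    HasDerivAt (fun x => α * f (x / α)) d t := by
  have := (hf.comp t ((hasDerivAt_id t).div_const α)).const_mul α
  rwa [one_div, mul_left_comm, mul_inv_cancel₀ hα, mul_one] at this

lemma HasDerivAt.eq_of_eqOn_Icc_mul {f v : ℝ → ℝ} {d d' R : ℝ} (hR : 0 < R)
    (hfv : ∀ ρ ∈ Icc 0 R, f ρ = ρ * v ρ) (hf : HasDerivAt f d 0) (hv : HasDerivAt v d' 0) :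
    d = v 0 := by
  have h0 : (0 : ℝ) ∈ Icc 0 R := ⟨le_rfl, hR.le⟩
  have hmul : HasDerivWithinAt f (1 * v 0 + 0 * d') (Icc 0 R) 0 :=
    ((hasDerivAt_id 0).mul hv).hasDerivWithinAt.congr hfv (hfv 0 h0)
  simpa using (uniqueDiffOn_Icc hR 0 h0).eq_deriv _ hf.hasDerivWithinAt hmul

/-- The contact set `I_u` of the paper, with `t = ρ̃_u`. -/
def contactSet (f : ℝ → ℝ) (R α t u : ℝ) : Set ℝ :=
  {ρ | ρ ∈ Icc 0 R ∧ f ρ = α * f (t / α) + u * (ρ - t)}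

lemma contactSet_zero_subset {f : ℝ → ℝ} {R α d : ℝ} (hfc : StrictConcaveOn ℝ (Icc 0 R) f)
    (hR : 0 ≤ R) (hf0 : f 0 = 0) (hd : HasDerivAt f d 0) : contactSet f R α 0 d ⊆ {0} := by
  rintro ρ ⟨hρ, hρf⟩
  by_contra hne
  have := hfc.lt_tangent_of_hasDerivAt ⟨le_rfl, hR⟩ hρ hne hd
  simp only [zero_div, hf0, mul_zero, zero_add, sub_zero] at hρf this
  exact this.ne hρf

lemma exists_lt_mem_contactSet {f : ℝ → ℝ} {R α t u : ℝ} (hfc : StrictConcaveOn ℝ (Icc 0 R) f)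
    (hfcont : ContinuousOn f (Icc 0 R)) (hf0 : f 0 = 0) (hfR : f R = 0) (hα : α ∈ Ioo 0 1)
    (ht : 0 < t) (htR : t / α ≤ R) (hu : 0 ≤ u) (hd : HasDerivAt f u (t / α)) :
    ∃ a b, a < b ∧ a ∈ contactSet f R α t u ∧ b ∈ contactSet f R α t u := by
  obtain ⟨hα0, hα1⟩ := hα
  set x := t / α with hx
  have htx : t = α * x := by rw [hx]; field_simp
  have hx0 : 0 < x := div_pos ht hα0
  have hxR : x ∈ Icc 0 R := ⟨hx0.le, htR⟩
  have htR' : t ≤ R := by nlinarith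
  have hux : u * x < f x := by
    have := hfc.lt_tangent_of_hasDerivAt hxR ⟨le_rfl, hx0.le.trans htR⟩ hx0.ne hd
    linarith
  have hft : α * f x < f t := by
    have := hfc.2 ⟨le_rfl, hx0.le.trans htR⟩ hxR hx0.ne (sub_pos.mpr hα1) hα0 (by ring)
    simp only [smul_eq_mul, hf0, mul_zero, zero_add] at this
    rwa [htx]
  set g : ℝ → ℝ := fun ρ => f ρ - (α * f x + u * (ρ - t))
  have hg : ContinuousOn g (Icc 0 R) := hfcont.sub (by fun_prop)
  have hg0 : g 0 < 0 := by simp only [g, hf0]; nlinarith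
  have hgt : 0 < g t := by simp only [g]; linarith
  have hgR : g R < 0 := by simp only [g, hfR]; nlinarith
  have hmem : ∀ ρ ∈ Icc 0 R, g ρ = 0 → ρ ∈ contactSet f R α t u := fun ρ hρ hgρ =>
    ⟨hρ, by simp only [g] at hgρ; linarith⟩
  obtain ⟨a, ha, hga⟩ := intermediate_value_Ioo ht.le (hg.mono (Icc_subset_Icc le_rfl htR'))
    ⟨hg0, hgt⟩
  obtain ⟨b, hb, hgb⟩ := intermediate_value_Ioo' htR' (hg.mono (Icc_subset_Icc ht.le le_rfl))
    ⟨hgR, hgt⟩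
  exact ⟨a, b, ha.2.trans hb.1, hmem a ⟨ha.1.le, ha.2.le.trans htR'⟩ hga,
    hmem b ⟨ht.le.trans hb.1.le, hb.2.le⟩ hgb⟩

theorem stmt_10_general
    (R β B α V : ℝ) (f v f' f'' v' : ℝ → ℝ)
    (hR : 0 < R) (hβ : 0 < β) (hα : α ∈ Set.Ioo (0:ℝ) 1)
    (hf0 : f 0 = 0) (hfR : f R = 0)
    (hfv : ∀ ρ ∈ Set.Icc (0:ℝ) R, f ρ = ρ * v ρ)
    (hfd1 : ∀ ρ ∈ Set.Icc (0:ℝ) R, HasDerivAt f (f' ρ) ρ)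
    (hfd2 : ∀ ρ ∈ Set.Icc (0:ℝ) R, HasDerivAt f' (f'' ρ) ρ)
    (hconc : ∀ ρ ∈ Set.Icc (0:ℝ) R, -B ≤ f'' ρ ∧ f'' ρ ≤ -β)
    (hvd : ∀ ρ ∈ Set.Icc (0:ℝ) R, HasDerivAt v (v' ρ) ρ)
    (hV : V = v 0)
    (rt : ℝ → ℝ)
    (hrt : ∀ u ∈ Set.Icc (0:ℝ) V, rt u ∈ Set.Icc (0:ℝ) (α * R) ∧
      HasDerivAt (fun x => α * f (x / α)) u (rt u))
    (rc rh : ℝ → ℝ)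
    (hrc : ∀ u ∈ Set.Icc (0:ℝ) V, IsLeast
      {ρ : ℝ | ρ ∈ Set.Icc (0:ℝ) R ∧ f ρ = α * f (rt u / α) + u * (ρ - rt u)} (rc u))
    (hrh : ∀ u ∈ Set.Icc (0:ℝ) V, IsGreatest
      {ρ : ℝ | ρ ∈ Set.Icc (0:ℝ) R ∧ f ρ = α * f (rt u / α) + u * (ρ - rt u)} (rh u))
    :
    ∀ u ∈ Set.Icc (0:ℝ) V, (rh u = rc u ↔ u = V) := by
  intro u hu
  have h0 : (0 : ℝ) ∈ Icc 0 R := ⟨le_rfl, hR.le⟩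
  have hanti : StrictAntiOn f' (Icc 0 R) :=
    strictAntiOn_Icc_of_hasDerivAt_neg hfd2 fun ρ hρ =>
      (hconc ρ hρ).2.trans_lt (neg_neg_of_pos hβ)
  have hconcave := strictConcaveOn_Icc_of_hasDerivAt hfd1 hanti
  have hf'0 : f' 0 = V := hV ▸ (hfd1 0 h0).eq_of_eqOn_Icc_mul hR hfv (hvd 0 h0)
  obtain ⟨⟨hrt0, hrtR⟩, hrtd⟩ := hrt u hu
  have hxR : rt u / α ∈ Icc 0 R :=
    ⟨div_nonneg hrt0 hα.1.le, (div_le_iff₀ hα.1).mpr (by linarith)⟩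
  have hf'x : f' (rt u / α) = u := ((hfd1 _ hxR).rescale hα.1.ne').unique hrtd
  constructor
  · intro heq
    by_contra hne
    have hrt_pos : 0 < rt u := hrt0.lt_of_ne fun h => hne (by simpa [← h, hf'0] using hf'x.symm)
    obtain ⟨a, b, hab, ha, hb⟩ := exists_lt_mem_contactSet hconcave
      (fun ρ hρ => (hfd1 ρ hρ).continuousAt.continuousWithinAt) hf0 hfR hα hrt_pos hxR.2 hu.1
      ((hfd1 _ hxR).congr_deriv hf'x)
    linarith [(hrc u hu).2 ha, (hrh u hu).2 hb]
  · intro huV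
    have hx0 : rt u / α = 0 := hanti.injOn hxR h0 (by rw [hf'x, hf'0, huV])
    have hrt_zero : rt u = 0 := by simpa [hα.1.ne'] using hx0
    have hsub : contactSet f R α (rt u) u ⊆ {0} := by
      rw [hrt_zero]
      exact contactSet_zero_subset hconcave hR.le hf0
        ((hfd1 0 h0).congr_deriv (hf'0.trans huV.symm))
    rw [hsub (hrh u hu).1, hsub (hrc u hu).1]

theorem stmt_10
    (R β B α V : ℝ) (f v f' f'' v' : ℝ → ℝ)
    (hR : 0 < R) (hβ : 0 < β) (hB : 0 < B) (hα : α ∈ Set.Ioo (0:ℝ) 1)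
    (hf0 : f 0 = 0) (hfR : f R = 0)
    (hfv : ∀ ρ ∈ Set.Icc (0:ℝ) R, f ρ = ρ * v ρ)
    (hfd1 : ∀ ρ ∈ Set.Icc (0:ℝ) R, HasDerivAt f (f' ρ) ρ)
    (hfd2 : ∀ ρ ∈ Set.Icc (0:ℝ) R, HasDerivAt f' (f'' ρ) ρ)
    (hfc : ContinuousOn f'' (Set.Icc (0:ℝ) R))
    (hconc : ∀ ρ ∈ Set.Icc (0:ℝ) R, -B ≤ f'' ρ ∧ f'' ρ ≤ -β)
    (hvd : ∀ ρ ∈ Set.Icc (0:ℝ) R, HasDerivAt v (v' ρ) ρ)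
    (hv'neg : ∀ ρ ∈ Set.Ioo (0:ℝ) R, v' ρ < 0)
    (hvnn : ∀ ρ ∈ Set.Icc (0:ℝ) R, 0 ≤ v ρ)
    (hV : V = v 0)
    (rt : ℝ → ℝ)
    (hrt : ∀ u ∈ Set.Icc (0:ℝ) V, rt u ∈ Set.Icc (0:ℝ) (α * R) ∧
      HasDerivAt (fun x => α * f (x / α)) u (rt u))
    (rc rh : ℝ → ℝ)
    (hrc : ∀ u ∈ Set.Icc (0:ℝ) V, IsLeast
      {ρ : ℝ | ρ ∈ Set.Icc (0:ℝ) R ∧ f ρ = α * f (rt u / α) + u * (ρ - rt u)} (rc u))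
    (hrh : ∀ u ∈ Set.Icc (0:ℝ) V, IsGreatest
      {ρ : ℝ | ρ ∈ Set.Icc (0:ℝ) R ∧ f ρ = α * f (rt u / α) + u * (ρ - rt u)} (rh u))
    :
    ∀ u ∈ Set.Icc (0:ℝ) V, (rh u = rc u ↔ u = V) :=
  stmt_10_general R β B α V f v f' f'' v' hR hβ hα hf0 hfR hfv hfd1 hfd2 hconc hvd hV rt hrt rc rh
    hrc hrh
end
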